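/- arXiv:1504.00048 — 2 statements merged into one kernel-verified Lean document; each statement's English description precedes it below -/
import Mathlib

section
/- Let σ:Σ→Σ be a topological Markov shift and r:Σ→ℝ a bounded Hölder continuous function. If x,y∈Σ and m,n∈ℤ satisfy y_m^∞ = x_n^∞ (i.e., y_{m+k} = x_{n+k} for all k≥0), then the limit lim_{k→∞} [r_{m+k}(y) − r_{n+k}(x)] exists; if moreover x is not pre-periodic, this limit is the same for every pair (m,n) with y_m^∞ = x_n^∞, and defines P^s(x,y). Symmetrically, if y_{−∞}^m = x_{−∞}^n (i.e., y_{m−k} = x_{n−k} for all k≥0), then lim_{k→−∞} [r_{m+k}(y) − r_{n+k}(x)] exists, and if x is not pre-periodic it is independent of the choice of (m,n), defining P^u(x,y). -/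
open MeasureTheory Filter Set
open scoped Classical

structure MarkovGraph where
  V : Type
  E : V → V → Prop
  countableV : Countable V
  in_edge : ∀ v, ∃ u, E u v
  out_edge : ∀ v, ∃ w, E v w

namespace MarkovGraph

variable (G : MarkovGraph)

/-- The two-sided path space of the graph. -/
def Space : Type := {x : ℤ → G.V // ∀ i, G.E (x i) (x (i + 1))}

/-- The left shift, as a bijection of the path space. -/
def shift : Equiv.Perm G.Space where
  toFun x := ⟨fun i => x.1 (i + 1), fun i => x.2 (i + 1)⟩
  invFun x := ⟨fun i => x.1 (i - 1), fun i => by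
    have h := x.2 (i - 1)
    have e1 : i - 1 + 1 = i + 1 - 1 := by ring
    rwa [e1] at h⟩
  left_inv x := Subtype.ext (funext fun i => by simp)
  right_inv x := Subtype.ext (funext fun i => by simp)

/-- The metric d(x,y) = exp(-min{|n| : x_n ≠ y_n}). -/
noncomputable def dist0 (x y : G.Space) : ℝ :=
  if x = y then 0
  else Real.exp (-(sInf {t : ℝ | ∃ n : ℤ, x.1 n ≠ y.1 n ∧ t = |(n : ℝ)|}))

/-- Hölder continuity with respect to `dist0`. -/
def HolderFun (f : G.Space → ℝ) : Prop :=
  ∃ C : ℝ, 0 < C ∧ ∃ α : ℝ, 0 < α ∧ α ≤ 1 ∧ ∀ x y, |f x - f y| ≤ C * dist0 G x y ^ α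

/-- Birkhoff sums `r_n` for `n : ℤ`. -/
noncomputable def birkhoff (r : G.Space → ℝ) (n : ℤ) (x : G.Space) : ℝ :=
  if 0 ≤ n then ∑ i ∈ Finset.range n.toNat, r ((G.shift ^ (i : ℤ)) x)
  else -∑ i ∈ Finset.range (-n).toNat, r ((G.shift ^ ((i : ℤ) - (-n).toNat)) x)

/-- The suspension space Σ_r = {(x,t) : 0 ≤ t < r(x)}. -/
def Susp (r : G.Space → ℝ) : Type := {p : G.Space × ℝ // 0 ≤ p.2 ∧ p.2 < r p.1}

/-- Defining property of the topological Markov flow with roof `r`. -/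
def IsTMFlow (r : G.Space → ℝ) (Φ : ℝ → G.Susp r → G.Susp r) : Prop :=
  ∀ τ p, ∃ n : ℤ, ((Φ τ p).1.1 = (G.shift ^ n) p.1.1) ∧
    ((Φ τ p).1.2 = p.1.2 + τ - birkhoff G r n p.1.1)

end MarkovGraph

namespace MarkovGraph

variable (G : MarkovGraph)

/-- x is pre-periodic if one of its one-sided tails is periodic. -/
def PrePeriodic (x : G.Space) : Prop :=
  (∃ m : ℤ, ∃ p : ℤ, 0 < p ∧ ∀ i, m ≤ i → x.1 (i + p) = x.1 i) ∨
  (∃ n : ℤ, ∃ p : ℤ, 0 < p ∧ ∀ i, i ≤ n → x.1 (i - p) = x.1 i)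

/-- y ∈ W^{ws}(x): some forward tails of x and y agree. -/
def Wws (x y : G.Space) : Prop := ∃ m n : ℤ, ∀ k : ℕ, y.1 (m + k) = x.1 (n + k)

/-- y ∈ W^{wu}(x): some backward tails of x and y agree. -/
def Wwu (x y : G.Space) : Prop := ∃ m n : ℤ, ∀ k : ℕ, y.1 (m - k) = x.1 (n - k)

end MarkovGraph

/-!
Both limits are telescoping series: the increment of `k ↦ r_{m+k}(y) - r_{n+k}(x)` is
`r(σ^{m+k} y) - r(σ^{n+k} x)`, and these two points share the coordinates `-k, …, k`, so by
Hölder continuity the increments decay geometrically. If two pairs `(m, n)` and `(m', n')`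
both match tails of `y` and `x`, then the tail of `x` is invariant under a shift by
`(n - m) - (n' - m')`; when `x` is not pre-periodic this offset vanishes, and the two
sequences are then reindexings of each other.
-/

open scoped Topology

lemma eq_of_tendsto_comp_add_natCast {α : Type*} [TopologicalSpace α] [T2Space α]
    {F : ℤ → α} {a b : ℤ} {L L' : α}
    (hL : Tendsto (fun k : ℕ => F (a + k)) atTop (𝓝 L))
    (hL' : Tendsto (fun k : ℕ => F (b + k)) atTop (𝓝 L')) : L = L' := by
  wlog hab : a ≤ b generalizing a b L L'
  · exact (this hL' hL (le_of_not_ge hab)).symm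
  obtain ⟨e, rfl⟩ := Int.le.dest hab
  refine tendsto_nhds_unique (hL.comp (tendsto_add_atTop_nat e)) ?_
  convert hL' using 2 with k
  simp only [Function.comp_apply, Nat.cast_add]
  ring_nf

namespace MarkovGraph

variable {G : MarkovGraph}

lemma shift_zpow_apply (t : ℤ) (x : G.Space) (i : ℤ) :
    ((G.shift ^ t) x).1 i = x.1 (i + t) := by
  induction t using Int.induction_on generalizing x i with
  | zero => simp
  | succ t ih =>
    rw [zpow_add_one, Equiv.Perm.mul_apply, ih, ← add_assoc]
    rfl
  | pred t ih =>
    rw [zpow_sub_one, Equiv.Perm.mul_apply, ih, add_sub_assoc']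
    rfl

section Birkhoff

variable (r : G.Space → ℝ)

lemma birkhoff_natCast (n : ℕ) (x : G.Space) :
    birkhoff G r n x = ∑ i ∈ Finset.range n, r ((G.shift ^ (i : ℤ)) x) := by
  simp [birkhoff]

lemma birkhoff_neg_natCast (n : ℕ) (x : G.Space) :
    birkhoff G r (-n) x = -∑ i ∈ Finset.range n, r ((G.shift ^ ((i : ℤ) - n)) x) := by
  rcases Nat.eq_zero_or_pos n with rfl | hn
  · simp [birkhoff]
  · rw [birkhoff, if_neg (by omega)]
    simp

lemma birkhoff_add_one (a : ℤ) (x : G.Space) :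
    birkhoff G r (a + 1) x = birkhoff G r a x + r ((G.shift ^ a) x) := by
  obtain ⟨n, rfl | rfl⟩ := a.eq_nat_or_neg
  · rw [← Nat.cast_add_one, birkhoff_natCast, birkhoff_natCast, Finset.sum_range_succ]
  · cases n with
    | zero => simp [birkhoff]
    | succ n =>
      rw [show -((n + 1 : ℕ) : ℤ) + 1 = -n by push_cast; ring, birkhoff_neg_natCast,
        birkhoff_neg_natCast, Finset.sum_range_succ']
      push_cast
      simp only [add_sub_add_right_eq_sub, zero_sub]
      ring

end Birkhoff

lemma dist0_nonneg (x y : G.Space) : 0 ≤ dist0 G x y := by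
  unfold dist0
  split_ifs
  exacts [le_rfl, (Real.exp_pos _).le]

lemma dist0_le_exp_neg {x y : G.Space} {k : ℕ} (h : ∀ i : ℤ, |i| ≤ k → x.1 i = y.1 i) :
    dist0 G x y ≤ Real.exp (-k) := by
  unfold dist0
  split_ifs with hxy
  · exact (Real.exp_pos _).le
  obtain ⟨n, hn⟩ : ∃ n, x.1 n ≠ y.1 n := by
    by_contra! hall
    exact hxy (Subtype.ext (funext hall))
  refine Real.exp_le_exp.2 (neg_le_neg (le_csInf ⟨_, n, hn, rfl⟩ ?_))
  rintro _ ⟨i, hi, rfl⟩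
  have : (k : ℤ) < |i| := lt_of_not_ge fun hle => hi (h i hle)
  rw [← Int.cast_abs]
  exact_mod_cast this.le

lemma HolderFun.exists_abs_sub_le_geometric {r : G.Space → ℝ} (hr : HolderFun G r) :
    ∃ C ρ : ℝ, ρ < 1 ∧ ∀ (u v : G.Space) (k : ℕ),
      (∀ i : ℤ, |i| ≤ k → u.1 i = v.1 i) → |r u - r v| ≤ C * ρ ^ k := by
  obtain ⟨C, hC, α, hα, -, hH⟩ := hr
  refine ⟨C, Real.exp (-α), Real.exp_lt_one_iff.2 (neg_lt_zero.2 hα), fun u v k h => ?_⟩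
  calc |r u - r v| ≤ C * dist0 G u v ^ α := hH u v
    _ ≤ C * Real.exp (-k) ^ α := by
      gcongr
      exacts [dist0_nonneg u v, dist0_le_exp_neg h]
    _ = C * Real.exp (-α) ^ k := by
      rw [← Real.exp_mul, ← Real.exp_nat_mul]
      ring_nf

lemma exists_tendsto_of_increment_eq_variation {r : G.Space → ℝ} (hr : HolderFun G r)
    {D : ℕ → ℝ} {u v : ℕ → G.Space} (hD : ∀ k, |D (k + 1) - D k| = |r (u k) - r (v k)|)
    (huv : ∀ (k : ℕ) (i : ℤ), |i| ≤ k → (u k).1 i = (v k).1 i) :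
    ∃ L, Tendsto D atTop (𝓝 L) := by
  obtain ⟨C, ρ, hρ, hdecay⟩ := hr.exists_abs_sub_le_geometric
  refine cauchySeq_tendsto_of_complete (cauchySeq_of_le_geometric ρ C hρ fun k => ?_)
  rw [dist_comm, Real.dist_eq, hD]
  exact hdecay _ _ k (huv k)

section Tails

variable {r : G.Space → ℝ} {x y : G.Space} {m n : ℤ}

lemma eq_add_of_forward_tail (h : ∀ k : ℕ, y.1 (m + k) = x.1 (n + k)) {t : ℤ} (ht : m ≤ t) :
    y.1 t = x.1 (t + (n - m)) := by
  have := h (t - m).toNat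
  rw [Int.toNat_of_nonneg (by omega)] at this
  convert this using 2 <;> ring

lemma eq_add_of_backward_tail (h : ∀ k : ℕ, y.1 (m - k) = x.1 (n - k)) {t : ℤ} (ht : t ≤ m) :
    y.1 t = x.1 (t + (n - m)) := by
  have := h (m - t).toNat
  rw [Int.toNat_of_nonneg (by omega)] at this
  convert this using 2 <;> ring

lemma prePeriodic_of_forward {N p : ℤ} (hp : p ≠ 0)
    (h : ∀ i, N ≤ i → x.1 (i + p) = x.1 i) : PrePeriodic G x := by
  rcases hp.lt_or_gt with hp | hp
  · refine Or.inl ⟨N - p, -p, by omega, fun i hi => ?_⟩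
    simpa using (h (i + -p) (by omega)).symm
  · exact Or.inl ⟨N, p, hp, h⟩

lemma prePeriodic_of_backward {N p : ℤ} (hp : p ≠ 0)
    (h : ∀ i, i ≤ N → x.1 (i + p) = x.1 i) : PrePeriodic G x := by
  rcases hp.lt_or_gt with hp | hp
  · exact Or.inr ⟨N, -p, by omega, fun i hi => by simpa using h i hi⟩
  · refine Or.inr ⟨N + p, p, hp, fun i hi => ?_⟩
    simpa using (h (i - p) (by omega)).symm

lemma sub_eq_sub_of_forward_tails {m' n' : ℤ} (hx : ¬ PrePeriodic G x)
    (h : ∀ k : ℕ, y.1 (m + k) = x.1 (n + k)) (h' : ∀ k : ℕ, y.1 (m' + k) = x.1 (n' + k)) :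
    n - m = n' - m' := by
  by_contra hne
  refine hx (prePeriodic_of_forward (N := max m m' + (n' - m')) (sub_ne_zero.2 hne) ?_)
  intro i hi
  have ht := (eq_add_of_forward_tail h (t := i - (n' - m')) (by omega)).symm.trans
    (eq_add_of_forward_tail h' (t := i - (n' - m')) (by omega))
  convert ht using 2 <;> ring

lemma sub_eq_sub_of_backward_tails {m' n' : ℤ} (hx : ¬ PrePeriodic G x)
    (h : ∀ k : ℕ, y.1 (m - k) = x.1 (n - k)) (h' : ∀ k : ℕ, y.1 (m' - k) = x.1 (n' - k)) :
    n - m = n' - m' := by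
  by_contra hne
  refine hx (prePeriodic_of_backward (N := min m m' + (n' - m')) (sub_ne_zero.2 hne) ?_)
  intro i hi
  have ht := (eq_add_of_backward_tail h (t := i - (n' - m')) (by omega)).symm.trans
    (eq_add_of_backward_tail h' (t := i - (n' - m')) (by omega))
  convert ht using 2 <;> ring

theorem exists_tendsto_birkhoff_sub_of_forward_tail (hr : HolderFun G r)
    (h : ∀ k : ℕ, y.1 (m + k) = x.1 (n + k)) :
    ∃ L, Tendsto (fun k : ℕ => birkhoff G r (m + k) y - birkhoff G r (n + k) x) atTop (𝓝 L) := by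
  refine exists_tendsto_of_increment_eq_variation hr
    (u := fun k => (G.shift ^ (m + k)) y) (v := fun k => (G.shift ^ (n + k)) x) (fun k => ?_)
    (fun k i hi => ?_)
  · push_cast
    rw [← add_assoc, ← add_assoc, birkhoff_add_one, birkhoff_add_one]
    ring_nf
  · have := abs_le.1 hi
    rw [shift_zpow_apply, shift_zpow_apply, eq_add_of_forward_tail h (by omega)]
    ring_nf

theorem exists_tendsto_birkhoff_sub_of_backward_tail (hr : HolderFun G r)
    (h : ∀ k : ℕ, y.1 (m - k) = x.1 (n - k)) :
    ∃ L, Tendsto (fun k : ℕ => birkhoff G r (m - k) y - birkhoff G r (n - k) x) atTop (𝓝 L) := by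
  refine exists_tendsto_of_increment_eq_variation hr
    (u := fun k => (G.shift ^ (m - k - 1)) y) (v := fun k => (G.shift ^ (n - k - 1)) x)
    (fun k => ?_) (fun k i hi => ?_)
  · rw [← abs_neg]
    push_cast
    rw [← sub_add_cancel (m - k) 1, ← sub_add_cancel (n - k) 1, birkhoff_add_one,
      birkhoff_add_one]
    ring_nf
  · have := abs_le.1 hi
    rw [shift_zpow_apply, shift_zpow_apply, eq_add_of_backward_tail h (by omega)]
    ring_nf

theorem birkhoff_limit_unique_of_forward_tails {m' n' : ℤ} {L L' : ℝ}
    (hx : ¬ PrePeriodic G x)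
    (h : ∀ k : ℕ, y.1 (m + k) = x.1 (n + k)) (h' : ∀ k : ℕ, y.1 (m' + k) = x.1 (n' + k))
    (hL : Tendsto (fun k : ℕ => birkhoff G r (m + k) y - birkhoff G r (n + k) x) atTop (𝓝 L))
    (hL' : Tendsto (fun k : ℕ => birkhoff G r (m' + k) y - birkhoff G r (n' + k) x) atTop
      (𝓝 L')) : L = L' := by
  have hc := sub_eq_sub_of_forward_tails hx h h'
  refine eq_of_tendsto_comp_add_natCast
    (F := fun j => birkhoff G r j y - birkhoff G r (j + (n - m)) x) (a := m) (b := m') ?_ ?_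
  · convert hL using 4; ring
  · convert hL' using 4; rw [hc]; ring

theorem birkhoff_limit_unique_of_backward_tails {m' n' : ℤ} {L L' : ℝ}
    (hx : ¬ PrePeriodic G x)
    (h : ∀ k : ℕ, y.1 (m - k) = x.1 (n - k)) (h' : ∀ k : ℕ, y.1 (m' - k) = x.1 (n' - k))
    (hL : Tendsto (fun k : ℕ => birkhoff G r (m - k) y - birkhoff G r (n - k) x) atTop (𝓝 L))
    (hL' : Tendsto (fun k : ℕ => birkhoff G r (m' - k) y - birkhoff G r (n' - k) x) atTop
      (𝓝 L')) : L = L' := by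
  have hc := sub_eq_sub_of_backward_tails hx h h'
  refine eq_of_tendsto_comp_add_natCast
    (F := fun j => birkhoff G r (-j) y - birkhoff G r (-j + (n - m)) x) (a := -m) (b := -m') ?_ ?_
  · convert hL using 4 <;> ring
  · convert hL' using 4 <;> [ring; (rw [hc]; ring)]

end Tails

end MarkovGraph

open MarkovGraph in
theorem statement4_general (G : MarkovGraph) (r : G.Space → ℝ)
    (hHolder : HolderFun G r) :
    (∀ x y : G.Space, ∀ m n : ℤ, (∀ k : ℕ, y.1 (m + k) = x.1 (n + k)) →
      ∃ L : ℝ, Filter.Tendsto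
        (fun k : ℕ => birkhoff G r (m + k) y - birkhoff G r (n + k) x)
        Filter.atTop (nhds L)) ∧
    (∀ x y : G.Space, ¬ PrePeriodic G x →
      ∀ m n m' n' : ℤ, (∀ k : ℕ, y.1 (m + k) = x.1 (n + k)) →
        (∀ k : ℕ, y.1 (m' + k) = x.1 (n' + k)) →
      ∀ L L' : ℝ,
        Filter.Tendsto (fun k : ℕ => birkhoff G r (m + k) y - birkhoff G r (n + k) x)
          Filter.atTop (nhds L) →
        Filter.Tendsto (fun k : ℕ => birkhoff G r (m' + k) y - birkhoff G r (n' + k) x)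
          Filter.atTop (nhds L') → L = L') ∧
    (∀ x y : G.Space, ∀ m n : ℤ, (∀ k : ℕ, y.1 (m - k) = x.1 (n - k)) →
      ∃ L : ℝ, Filter.Tendsto
        (fun k : ℕ => birkhoff G r (m - k) y - birkhoff G r (n - k) x)
        Filter.atTop (nhds L)) ∧
    (∀ x y : G.Space, ¬ PrePeriodic G x →
      ∀ m n m' n' : ℤ, (∀ k : ℕ, y.1 (m - k) = x.1 (n - k)) →
        (∀ k : ℕ, y.1 (m' - k) = x.1 (n' - k)) →
      ∀ L L' : ℝ,
        Filter.Tendsto (fun k : ℕ => birkhoff G r (m - k) y - birkhoff G r (n - k) x)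
          Filter.atTop (nhds L) →
        Filter.Tendsto (fun k : ℕ => birkhoff G r (m' - k) y - birkhoff G r (n' - k) x)
          Filter.atTop (nhds L') → L = L') :=
  ⟨fun _ _ _ _ h => exists_tendsto_birkhoff_sub_of_forward_tail hHolder h,
    fun _ _ hx _ _ _ _ h h' _ _ hL hL' =>
      birkhoff_limit_unique_of_forward_tails hx h h' hL hL',
    fun _ _ _ _ h => exists_tendsto_birkhoff_sub_of_backward_tail hHolder h,
    fun _ _ hx _ _ _ _ h h' _ _ hL hL' =>
      birkhoff_limit_unique_of_backward_tails hx h h' hL hL'⟩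

open MarkovGraph in
/-- Existence of the Bowen–Marcus limits, and their independence of the
choice of matching pair `(m,n)` when `x` is not pre-periodic. -/
theorem statement4 (G : MarkovGraph) (r : G.Space → ℝ)
    (hbdd : ∃ M : ℝ, ∀ x, |r x| ≤ M) (hHolder : HolderFun G r) :
    (∀ x y : G.Space, ∀ m n : ℤ, (∀ k : ℕ, y.1 (m + k) = x.1 (n + k)) →
      ∃ L : ℝ, Filter.Tendsto
        (fun k : ℕ => birkhoff G r (m + k) y - birkhoff G r (n + k) x)
        Filter.atTop (nhds L)) ∧
    (∀ x y : G.Space, ¬ PrePeriodic G x →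
      ∀ m n m' n' : ℤ, (∀ k : ℕ, y.1 (m + k) = x.1 (n + k)) →
        (∀ k : ℕ, y.1 (m' + k) = x.1 (n' + k)) →
      ∀ L L' : ℝ,
        Filter.Tendsto (fun k : ℕ => birkhoff G r (m + k) y - birkhoff G r (n + k) x)
          Filter.atTop (nhds L) →
        Filter.Tendsto (fun k : ℕ => birkhoff G r (m' + k) y - birkhoff G r (n' + k) x)
          Filter.atTop (nhds L') → L = L') ∧
    (∀ x y : G.Space, ∀ m n : ℤ, (∀ k : ℕ, y.1 (m - k) = x.1 (n - k)) →
      ∃ L : ℝ, Filter.Tendsto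
        (fun k : ℕ => birkhoff G r (m - k) y - birkhoff G r (n - k) x)
        Filter.atTop (nhds L)) ∧
    (∀ x y : G.Space, ¬ PrePeriodic G x →
      ∀ m n m' n' : ℤ, (∀ k : ℕ, y.1 (m - k) = x.1 (n - k)) →
        (∀ k : ℕ, y.1 (m' - k) = x.1 (n' - k)) →
      ∀ L L' : ℝ,
        Filter.Tendsto (fun k : ℕ => birkhoff G r (m - k) y - birkhoff G r (n - k) x)
          Filter.atTop (nhds L) →
        Filter.Tendsto (fun k : ℕ => birkhoff G r (m' - k) y - birkhoff G r (n' - k) x)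
          Filter.atTop (nhds L') → L = L') :=
  statement4_general G r hHolder
end

section
/- Let σ:Σ→Σ be a topologically transitive topological Markov shift and ν a σ-invariant Borel probability measure on Σ giving positive measure to every nonempty cylinder. Suppose that for every edge v→w of the graph there is a constant C_{vw}>1 such that for all m<0, n>0 and every nonempty cylinder _m[v_m,…,v_n] with v_0=v and v_1=w: C_{vw}^{−1} ≤ ν(_m[v_m,…,v_n]) / (ν(_m[v_m,…,v_0])·ν(_0[v_0,…,v_n])) ≤ C_{vw}. Then for all x,y∈Σ with x_0 = y_0 = v and every edge v→w, every Borel set E ⊂ [v]∩σ^{−1}[w] satisfies C_{vw}^{−1}·(ν^s_x ⋆ ν^u_y)(E) ≤ ν(E) ≤ C_{vw}·(ν^s_x ⋆ ν^u_y)(E); in particular ν^s_x ⋆ ν^u_y and the restriction of ν to [v] = {z : z_0 = v} are mutually absolutely continuous, i.e., ν has local product structure. -/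
open MeasureTheory Filter Set
open scoped Classical

instance (G : MarkovGraph) : MeasurableSpace G.V := ⊤

instance (G : MarkovGraph) : MeasurableSpace G.Space :=
  inferInstanceAs (MeasurableSpace {x : ℤ → G.V // ∀ i, G.E (x i) (x (i + 1))})

instance (G : MarkovGraph) (r : G.Space → ℝ) : MeasurableSpace (G.Susp r) :=
  inferInstanceAs (MeasurableSpace {p : G.Space × ℝ // 0 ≤ p.2 ∧ p.2 < r p.1})

namespace MarkovGraph

variable (G : MarkovGraph)

/-- The one-sided path space Σ^s. -/
def OS : Type := {x : ℕ → G.V // ∀ i, G.E (x i) (x (i + 1))}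

/-- The one-sided left shift σ_s. -/
def shiftOS (x : G.OS) : G.OS := ⟨fun i => x.1 (i + 1), fun i => x.2 (i + 1)⟩

/-- The projection π_s : Σ → Σ^s, x ↦ (x_0, x_1, …). -/
def projOS (x : G.Space) : G.OS :=
  ⟨fun i => x.1 i, fun i => by push_cast; exact x.2 (i : ℤ)⟩

/-- The one-sided tail (x_m, x_{m+1}, …) of a two-sided sequence. -/
def tailOS (x : G.Space) (m : ℤ) : G.OS :=
  ⟨fun i => x.1 (m + i), fun i => by push_cast; rw [← add_assoc]; exact x.2 (m + (i : ℤ))⟩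

/-- One-sided cylinder [x_0, …, x_k] around a point. -/
def cylOS (x : G.OS) (k : ℕ) : Set G.OS := {y : G.OS | ∀ i ≤ k, y.1 i = x.1 i}

/-- Two-sided cylinder _a[x_a, …, x_b] around a point. -/
def cylZ (x : G.Space) (a b : ℤ) : Set G.Space :=
  {y : G.Space | ∀ i : ℤ, a ≤ i → i ≤ b → y.1 i = x.1 i}

end MarkovGraph

instance (G : MarkovGraph) : MeasurableSpace G.OS :=
  inferInstanceAs (MeasurableSpace {x : ℕ → G.V // ∀ i, G.E (x i) (x (i + 1))})

namespace MarkovGraph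

variable (G : MarkovGraph)

/-- The Smale bracket [x,y]: z_i = x_i for i ≤ 0 and z_i = y_i for i ≥ 0 (defined when
x_0 = y_0; junk value `x` otherwise). -/
noncomputable def bracket (x y : G.Space) : G.Space :=
  if h : x.1 0 = y.1 0 then
    ⟨fun i => if i ≤ 0 then x.1 i else y.1 i, by
      intro i
      by_cases h1 : i + 1 ≤ 0
      · have h0 : i ≤ 0 := by omega
        simp only [if_pos h0, if_pos h1]
        exact x.2 i
      · by_cases h0 : i ≤ 0
        · have hi : i = 0 := by omega
          subst hi
          simp only [if_pos h0, if_neg h1]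
          rw [h]
          exact y.2 0
        · simp only [if_neg h0, if_neg h1]
          exact y.2 i⟩
  else x

/-- The projection measure ν^s_x = ν ∘ (p^s_x)⁻¹ on W^s_loc(x), where
p^s_x(z) = [z,x] on the cylinder [x_0]. -/
noncomputable def nuS (ν : Measure G.Space) (x : G.Space) : Measure G.Space :=
  Measure.map (fun z => bracket G z x) (ν.restrict {z : G.Space | z.1 0 = x.1 0})

/-- The projection measure ν^u_y = ν ∘ (p^u_y)⁻¹ on W^u_loc(y), where
p^u_y(z) = [y,z] on the cylinder [y_0]. -/
noncomputable def nuU (ν : Measure G.Space) (y : G.Space) : Measure G.Space :=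
  Measure.map (fun z => bracket G y z) (ν.restrict {z : G.Space | z.1 0 = y.1 0})

/-- The Smale bracket of two measures:
(μs ⋆ μu)(E) = ∫∫ 1_E([x',y']) dμs(x') dμu(y'). -/
noncomputable def star (μs μu : Measure G.Space) (E : Set G.Space) : ENNReal :=
  ∫⁻ y', ∫⁻ x', E.indicator (fun _ => (1 : ENNReal)) (bracket G x' y') ∂μs ∂μu

end MarkovGraph

/-!
The projections are undone by the bracket, `[[a, x], [y, b]] = [a, b]`, so `ν^s_x ⋆ ν^u_y` is the
image of `ν|[v] ⊗ ν|[v]` under `(a, b) ↦ [a, b]`; this product measure gives the cylinder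
`_m[z_m, …, z_n]` (`m ≤ 0 ≤ n`) the mass `ν(_m[z_m, …, z_0]) · ν(_0[z_0, …, z_n])`. The hypothesis
therefore compares `ν` and the product measure on every symmetric cylinder inside `[v] ∩ σ⁻¹[w]`.
By countable additivity the comparison passes to every set determined by finitely many
coordinates; these sets form an algebra generating the σ-algebra, and approximation by them
extends the comparison to all measurable sets.
-/

open scoped ENNReal NNReal symmDiff

theorem MeasureTheory.Measure.le_of_forall_mem_isSetAlgebra {α : Type*} [m : MeasurableSpace α]
    {𝒜 : Set (Set α)} (h𝒜 : IsSetAlgebra 𝒜) (hgen : m = MeasurableSpace.generateFrom 𝒜)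
    {μ ν : Measure α} [IsFiniteMeasure μ] [IsFiniteMeasure ν] (h : ∀ A ∈ 𝒜, μ A ≤ ν A) :
    μ ≤ ν := by
  refine Measure.le_iff.2 fun E hE => ENNReal.le_of_forall_pos_le_add fun ε hε _ => ?_
  obtain ⟨A, hA, hEA⟩ := (Measure.MeasureDense.of_generateFrom_isSetAlgebra_finite (μ + ν) h𝒜
    hgen).approx E hE (measure_ne_top _ _) ε hε
  have hle_symmDiff : ∀ (μ : Measure α) (s t : Set α), μ s ≤ μ t + μ (s ∆ t) := fun μ s t =>
    tsub_le_iff_left.1 le_measure_symmDiff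
  calc μ E ≤ ν A + μ (E ∆ A) := (hle_symmDiff μ E A).trans (add_le_add_left (h A hA) _)
    _ ≤ ν E + ν (A ∆ E) + μ (E ∆ A) := by gcongr; exact hle_symmDiff ν A E
    _ = ν E + (μ + ν) (E ∆ A) := by
        rw [Measure.add_apply, symmDiff_comm A E]; ring
    _ ≤ ν E + ε := by gcongr; simpa using hEA.le

theorem ENNReal.ofReal_inv_mul_le {a b : ℝ≥0∞} {c : ℝ} (h : a ≤ ENNReal.ofReal c * b) :
    ENNReal.ofReal c⁻¹ * a ≤ b := by
  rcases le_or_gt c 0 with hc | hc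
  · simp [ENNReal.ofReal_of_nonpos (inv_nonpos.2 hc)]
  · rwa [ENNReal.ofReal_inv_of_pos hc, ENNReal.inv_mul_le_iff (by simpa) ENNReal.ofReal_ne_top]

namespace MarkovGraph

variable {G : MarkovGraph}

instance : Countable G.V := G.countableV

instance : DiscreteMeasurableSpace G.V := ⟨fun _ => trivial⟩

lemma measurable_coord (i : ℤ) : Measurable fun z : G.Space => z.1 i :=
  (measurable_pi_apply i).comp measurable_subtype_coe

lemma measurableSet_cylZ (z : G.Space) (a b : ℤ) : MeasurableSet (cylZ G z a b) := by
  have : cylZ G z a b = ⋂ i ∈ Icc a b, (fun y : G.Space => y.1 i) ⁻¹' {z.1 i} := by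
    ext; simp [cylZ]
  rw [this]
  exact .biInter (to_countable _) fun i _ => measurable_coord i (measurableSet_singleton _)

lemma mem_cylZ_comm {y z : G.Space} {a b : ℤ} : y ∈ cylZ G z a b ↔ z ∈ cylZ G y a b :=
  ⟨fun h i h1 h2 => (h i h1 h2).symm, fun h i h1 h2 => (h i h1 h2).symm⟩

lemma cylZ_subset_cylZ {z : G.Space} {a b a' b' : ℤ} (ha : a' ≤ a) (hb : b ≤ b') :
    cylZ G z a' b' ⊆ cylZ G z a b :=
  fun _ hy i h1 h2 => hy i (ha.trans h1) (h2.trans hb)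

lemma bracket_apply {x y : G.Space} (h : x.1 0 = y.1 0) (i : ℤ) :
    (bracket G x y).1 i = if i ≤ 0 then x.1 i else y.1 i := by
  simp [bracket, h]

lemma bracket_of_ne {x y : G.Space} (h : x.1 0 ≠ y.1 0) : bracket G x y = x := dif_neg h

lemma measurable_bracket : Measurable fun p : G.Space × G.Space => bracket G p.1 p.2 := by
  refine Measurable.subtype_mk (measurable_pi_lambda
    (fun p : G.Space × G.Space => (bracket G p.1 p.2).1) fun i => ?_)
  have hval : (fun p : G.Space × G.Space => (bracket G p.1 p.2).1 i) = fun p =>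
      if p.1.1 0 = p.2.1 0 then (if i ≤ 0 then p.1.1 i else p.2.1 i) else p.1.1 i := by
    funext p
    split_ifs with h
    · rw [bracket_apply h, if_pos ‹_›]
    · rw [bracket_apply h, if_neg ‹_›]
    · rw [bracket_of_ne h]
  rw [hval]
  have hfst : Measurable fun p : G.Space × G.Space => p.1.1 i :=
    (measurable_coord i).comp measurable_fst
  refine Measurable.ite (measurableSet_eq_fun ((measurable_coord 0).comp measurable_fst)
    ((measurable_coord 0).comp measurable_snd)) ?_ hfst
  split_ifs
  · exact hfst
  · exact (measurable_coord i).comp measurable_snd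

lemma bracket_bracket {x y a b : G.Space} (hxy : x.1 0 = y.1 0) (ha : a.1 0 = x.1 0)
    (hb : b.1 0 = y.1 0) : bracket G (bracket G a x) (bracket G y b) = bracket G a b := by
  have hab : a.1 0 = b.1 0 := by rw [ha, hxy, hb]
  have h0 : (bracket G a x).1 0 = (bracket G y b).1 0 := by
    rw [bracket_apply ha, bracket_apply hb.symm]
    simp [ha, hxy]
  apply Subtype.ext
  funext i
  rw [bracket_apply h0, bracket_apply hab, bracket_apply ha, bracket_apply hb.symm]
  split_ifs <;> rfl

def DependsOnWindow (k : ℕ) (A : Set G.Space) : Prop :=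
  ∀ z ∈ A, cylZ G z (-k) k ⊆ A

lemma DependsOnWindow.inter {k : ℕ} {A B : Set G.Space} (hA : DependsOnWindow k A)
    (hB : DependsOnWindow k B) : DependsOnWindow k (A ∩ B) :=
  fun z hz => subset_inter (hA z hz.1) (hB z hz.2)

variable (G) in
def windowSets : Set (Set G.Space) := {A | ∃ k, DependsOnWindow k A}

lemma DependsOnWindow.mono {k k' : ℕ} {A : Set G.Space} (h : DependsOnWindow k A) (hk : k ≤ k') :
    DependsOnWindow k' A :=
  fun z hz => (cylZ_subset_cylZ (by omega) (by omega)).trans (h z hz)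

lemma isSetAlgebra_windowSets : IsSetAlgebra (windowSets G) where
  empty_mem := ⟨0, fun _ hz => hz.elim⟩
  compl_mem := by
    rintro A ⟨k, hA⟩
    exact ⟨k, fun z hz y hy hyA => hz (hA y hyA (mem_cylZ_comm.1 hy))⟩
  union_mem := by
    rintro A B ⟨k, hA⟩ ⟨l, hB⟩
    refine ⟨max k l, fun z hz => ?_⟩
    rcases hz with hz | hz
    · exact ((hA.mono (le_max_left k l)) z hz).trans subset_union_left
    · exact ((hB.mono (le_max_right k l)) z hz).trans subset_union_right

def window (k : ℕ) (z : G.Space) : Icc (-(k : ℤ)) k → G.V := fun i => z.1 i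

lemma measurable_window (k : ℕ) : Measurable (window (G := G) k) :=
  measurable_pi_lambda _ fun i => measurable_coord i

lemma window_preimage_singleton (k : ℕ) (z : G.Space) :
    window k ⁻¹' {window k z} = cylZ G z (-k) k := by
  ext y
  simp [window, funext_iff, cylZ]

lemma DependsOnWindow.window_preimage_image {k : ℕ} {A : Set G.Space} (h : DependsOnWindow k A) :
    window k ⁻¹' (window k '' A) = A := by
  refine (subset_preimage_image _ _).antisymm' ?_
  rintro y ⟨z, hz, hzy⟩
  exact h z hz (by rw [← window_preimage_singleton]; exact hzy.symm)

lemma DependsOnWindow.measurableSet {k : ℕ} {A : Set G.Space} (h : DependsOnWindow k A) :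
    MeasurableSet A :=
  h.window_preimage_image ▸ measurable_window k (to_countable _).measurableSet

lemma DependsOnWindow.measure_le {k : ℕ} {A : Set G.Space} (h : DependsOnWindow k A)
    {μ ν : Measure G.Space} (hcyl : ∀ z ∈ A, μ (cylZ G z (-k) k) ≤ ν (cylZ G z (-k) k)) :
    μ A ≤ ν A := by
  have hfib : ∀ t, MeasurableSet (window (G := G) k ⁻¹' {t}) := fun t =>
    measurable_window k (measurableSet_singleton t)
  rw [← h.window_preimage_image,
    ← tsum_measure_preimage_singleton (to_countable _) fun t _ => hfib t,
    ← tsum_measure_preimage_singleton (to_countable _) fun t _ => hfib t]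
  refine ENNReal.tsum_le_tsum ?_
  rintro ⟨_, z, hz, rfl⟩
  rw [window_preimage_singleton]
  exact hcyl z hz

lemma generateFrom_windowSets :
    (inferInstance : MeasurableSpace G.Space) = MeasurableSpace.generateFrom (windowSets G) := by
  refine le_antisymm ?_ (MeasurableSpace.generateFrom_le fun A hA => ?_)
  · have : Measurable[MeasurableSpace.generateFrom (windowSets G)] (Subtype.val (p := _)) :=
      (@measurable_pi_iff _ _ _ (MeasurableSpace.generateFrom (windowSets G)) _ _).2 fun i s _ =>
        MeasurableSpace.measurableSet_generateFrom ⟨i.natAbs, fun z hz y hy => ?_⟩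
    · exact this.comap_le
    rwa [mem_preimage, hy i (by omega) (by omega)]
  · obtain ⟨k, hA⟩ := hA
    exact hA.measurableSet

lemma measure_le_of_forall_cylZ {μ₁ μ₂ : Measure G.Space} [IsFiniteMeasure μ₁]
    [IsFiniteMeasure μ₂] {k₀ : ℕ} {S : Set G.Space} (hS : DependsOnWindow k₀ S)
    (hcyl : ∀ z ∈ S, ∀ k : ℕ, k₀ ≤ k → μ₁ (cylZ G z (-k) k) ≤ μ₂ (cylZ G z (-k) k))
    {E : Set G.Space} (hES : E ⊆ S) : μ₁ E ≤ μ₂ E := by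
  have hle : μ₁.restrict S ≤ μ₂.restrict S := by
    refine Measure.le_of_forall_mem_isSetAlgebra isSetAlgebra_windowSets generateFrom_windowSets ?_
    rintro A ⟨k, hA⟩
    rw [Measure.restrict_apply' hS.measurableSet, Measure.restrict_apply' hS.measurableSet]
    exact ((hA.mono (le_max_left k k₀)).inter (hS.mono (le_max_right k k₀))).measure_le
      fun z hz => hcyl z hz.2 _ (le_max_right k k₀)
  simpa only [Measure.restrict_eq_self _ hES] using Measure.le_iff'.1 hle E

noncomputable def bracketMeasure (ν : Measure G.Space) (v : G.V) : Measure G.Space :=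
  ((ν.restrict {z | z.1 0 = v}).prod (ν.restrict {z | z.1 0 = v})).map
    fun p => bracket G p.1 p.2

instance (ν : Measure G.Space) [IsFiniteMeasure ν] (v : G.V) :
    IsFiniteMeasure (bracketMeasure ν v) := by
  unfold bracketMeasure; infer_instance

lemma bracketMeasure_cylZ (ν : Measure G.Space) [IsFiniteMeasure ν] {z : G.Space} {m n : ℤ}
    (hm : m ≤ 0) (hn : 0 ≤ n) :
    bracketMeasure ν (z.1 0) (cylZ G z m n) = ν (cylZ G z m 0) * ν (cylZ G z 0 n) := by
  have hpre : (fun p : G.Space × G.Space => bracket G p.1 p.2) ⁻¹' cylZ G z m n ∩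
      {a | a.1 0 = z.1 0} ×ˢ {b | b.1 0 = z.1 0} = cylZ G z m 0 ×ˢ cylZ G z 0 n := by
    ext ⟨a, b⟩
    simp only [mem_inter_iff, mem_preimage, mem_prod, mem_ofPred_eq, cylZ]
    constructor
    · rintro ⟨hab, ha, hb⟩
      have hbr := bracket_apply (ha.trans hb.symm)
      refine ⟨fun i h1 h2 => ?_, fun i h1 h2 => ?_⟩
      · simpa [hbr, h2] using hab i h1 (h2.trans hn)
      · rcases h1.eq_or_lt with rfl | h1
        · exact hb
        · simpa [hbr, h1.not_ge] using hab i (hm.trans h1.le) h2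
    · rintro ⟨ha, hb⟩
      have ha0 := ha 0 hm le_rfl
      have hb0 := hb 0 le_rfl hn
      refine ⟨fun i h1 h2 => ?_, ha0, hb0⟩
      rw [bracket_apply (ha0.trans hb0.symm)]
      split_ifs with h
      · exact ha i h1 h
      · exact hb i (by omega) h2
  rw [bracketMeasure, Measure.map_apply measurable_bracket (measurableSet_cylZ z m n),
    Measure.prod_restrict, Measure.restrict_apply (measurable_bracket (measurableSet_cylZ z m n)),
    hpre, Measure.prod_prod]

instance (ν : Measure G.Space) [IsFiniteMeasure ν] (x : G.Space) :
    IsFiniteMeasure (nuS G ν x) := by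
  unfold nuS; infer_instance

lemma star_eq_bracketMeasure (ν : Measure G.Space) [IsFiniteMeasure ν] {x y : G.Space}
    (hxy : x.1 0 = y.1 0) {E : Set G.Space} (hE : MeasurableSet E) :
    star G (nuS G ν x) (nuU G ν y) E = bracketMeasure ν (x.1 0) E := by
  set s := {z : G.Space | z.1 0 = x.1 0}
  have hs : MeasurableSet s := measurable_coord 0 (measurableSet_singleton _)
  have hind : Measurable (E.indicator fun _ => (1 : ℝ≥0∞)) := measurable_const.indicator hE
  have hsy : {z : G.Space | z.1 0 = y.1 0} = s := by simp only [s, hxy]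
  have hbr := measurable_bracket (G := G)
  have hleft : ∀ c, Measurable fun z => bracket G z c := fun _ =>
    hbr.comp (measurable_id.prodMk measurable_const)
  have hright : Measurable fun z => bracket G y z :=
    hbr.comp (measurable_const.prodMk measurable_id)
  calc star G (nuS G ν x) (nuU G ν y) E
      = ∫⁻ b in s, ∫⁻ a in s,
          E.indicator (fun _ => 1) (bracket G (bracket G a x) (bracket G y b)) ∂ν ∂ν := by
        have hint : Measurable fun b =>
            ∫⁻ a, E.indicator (fun _ => (1 : ℝ≥0∞)) (bracket G a b) ∂nuS G ν x :=
          (hind.comp hbr).lintegral_prod_left'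
        rw [star, nuU, hsy, lintegral_map hint hright]
        exact lintegral_congr fun b => lintegral_map (hind.comp (hleft _)) (hleft x)
    _ = ∫⁻ b in s, ∫⁻ a in s, E.indicator (fun _ => 1) (bracket G a b) ∂ν ∂ν :=
        setLIntegral_congr_fun hs fun b hb => setLIntegral_congr_fun hs fun a ha => by
          rw [bracket_bracket hxy ha (hb.trans hxy)]
    _ = ∫⁻ p, E.indicator (fun _ => 1) (bracket G p.1 p.2) ∂(ν.restrict s).prod (ν.restrict s) :=
        (lintegral_prod_symm _ (hind.comp hbr).aemeasurable).symm
    _ = bracketMeasure ν (x.1 0) E := by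
        rw [bracketMeasure, ← lintegral_map hind hbr, lintegral_indicator_const hE, one_mul]

lemma measure_comparable_bracketMeasure {ν : Measure G.Space} [IsFiniteMeasure ν] {v w : G.V}
    {c : ℝ≥0} (hbound : ∀ z : G.Space, z.1 0 = v → z.1 1 = w → ∀ k : ℕ, 1 ≤ k →
      ν (cylZ G z (-k) k) ≤ c * (ν (cylZ G z (-k) 0) * ν (cylZ G z 0 k)) ∧
      ν (cylZ G z (-k) 0) * ν (cylZ G z 0 k) ≤ c * ν (cylZ G z (-k) k))
    {E : Set G.Space} (hES : ∀ z ∈ E, z.1 0 = v ∧ z.1 1 = w) :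
    ν E ≤ c * bracketMeasure ν v E ∧ bracketMeasure ν v E ≤ c * ν E := by
  have hS : DependsOnWindow 1 {z : G.Space | z.1 0 = v ∧ z.1 1 = w} := fun z hz y hy =>
    ⟨(hy 0 (by omega) (by omega)).trans hz.1, (hy 1 (by omega) (by omega)).trans hz.2⟩
  simp only [← Measure.coe_nnreal_smul_apply]
  constructor <;> refine measure_le_of_forall_cylZ hS ?_ hES <;>
    rintro z ⟨rfl, rfl⟩ k hk <;>
    rw [Measure.coe_nnreal_smul_apply, bracketMeasure_cylZ ν (by omega) (by omega)]
  exacts [(hbound z rfl rfl k hk).1, (hbound z rfl rfl k hk).2]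

end MarkovGraph

open MarkovGraph in
theorem statement9_general (G : MarkovGraph)
    (ν : Measure G.Space) (hνp : IsProbabilityMeasure ν)
    (C : G.V → G.V → ℝ)
    (hbound : ∀ (x : G.Space) (m n : ℤ), m < 0 → 0 < n →
      ν (cylZ G x m n) ≤
          ENNReal.ofReal (C (x.1 0) (x.1 1)) * (ν (cylZ G x m 0) * ν (cylZ G x 0 n)) ∧
      ν (cylZ G x m 0) * ν (cylZ G x 0 n) ≤
          ENNReal.ofReal (C (x.1 0) (x.1 1)) * ν (cylZ G x m n)) :
    ∀ x y : G.Space, x.1 0 = y.1 0 →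
      (∀ (w : G.V) (E : Set G.Space), MeasurableSet E →
        (∀ z ∈ E, z.1 0 = x.1 0 ∧ z.1 1 = w) →
        ENNReal.ofReal ((C (x.1 0) w)⁻¹) * star G (nuS G ν x) (nuU G ν y) E ≤ ν E ∧
        ν E ≤ ENNReal.ofReal (C (x.1 0) w) * star G (nuS G ν x) (nuU G ν y) E) ∧
      (∀ E : Set G.Space, MeasurableSet E → (∀ z ∈ E, z.1 0 = x.1 0) →
        (star G (nuS G ν x) (nuU G ν y) E = 0 ↔ ν E = 0)) := by
  intro x y hxy
  have hcomp : ∀ (w : G.V) (E : Set G.Space), (∀ z ∈ E, z.1 0 = x.1 0 ∧ z.1 1 = w) →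
      ν E ≤ ENNReal.ofReal (C (x.1 0) w) * bracketMeasure ν (x.1 0) E ∧
      bracketMeasure ν (x.1 0) E ≤ ENNReal.ofReal (C (x.1 0) w) * ν E := fun w E hES =>
    measure_comparable_bracketMeasure (fun z hz0 hz1 k hk => hz0 ▸ hz1 ▸
      hbound z (-k) k (by omega) (by omega)) hES
  refine ⟨fun w E hE hES => ?_, fun E hE hES => ?_⟩
  · rw [star_eq_bracketMeasure ν hxy hE]
    obtain ⟨hle, hge⟩ := hcomp w E hES
    exact ⟨ENNReal.ofReal_inv_mul_le hge, hle⟩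
  · have hEw : E = ⋃ w, E ∩ {z | z.1 1 = w} := by ext; simp
    rw [star_eq_bracketMeasure ν hxy hE, hEw, measure_iUnion_null_iff, measure_iUnion_null_iff]
    refine forall_congr' fun w => ?_
    obtain ⟨hle, hge⟩ := hcomp w (E ∩ {z | z.1 1 = w}) fun z hz => ⟨hES z hz.1, hz.2⟩
    exact ⟨fun h => by simpa [h] using hle, fun h => by simpa [h] using hge⟩

open MarkovGraph in
/-- A quasi-product bound on cylinders implies the local product
structure: the Smale product ν^s_x ⋆ ν^u_y is comparable with ν on two-cylinders, and in
particular it is mutually absolutely continuous with ν restricted to [v]. -/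
theorem statement9 (G : MarkovGraph) (hTrans : ∀ u v : G.V,
      ∃ (k : ℕ) (w : ℕ → G.V), w 0 = u ∧ w k = v ∧ ∀ i < k, G.E (w i) (w (i + 1)))
    (ν : Measure G.Space) (hνp : IsProbabilityMeasure ν)
    (hνinv : MeasurePreserving (fun z => G.shift z) ν ν)
    (hνpos : ∀ (x : G.Space) (a b : ℤ), 0 < ν (cylZ G x a b))
    (C : G.V → G.V → ℝ) (hC : ∀ v w, G.E v w → 1 < C v w)
    (hbound : ∀ (x : G.Space) (m n : ℤ), m < 0 → 0 < n →
      ν (cylZ G x m n) ≤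
          ENNReal.ofReal (C (x.1 0) (x.1 1)) * (ν (cylZ G x m 0) * ν (cylZ G x 0 n)) ∧
      ν (cylZ G x m 0) * ν (cylZ G x 0 n) ≤
          ENNReal.ofReal (C (x.1 0) (x.1 1)) * ν (cylZ G x m n)) :
    ∀ x y : G.Space, x.1 0 = y.1 0 →
      (∀ (w : G.V) (E : Set G.Space), MeasurableSet E →
        (∀ z ∈ E, z.1 0 = x.1 0 ∧ z.1 1 = w) →
        ENNReal.ofReal ((C (x.1 0) w)⁻¹) * star G (nuS G ν x) (nuU G ν y) E ≤ ν E ∧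
        ν E ≤ ENNReal.ofReal (C (x.1 0) w) * star G (nuS G ν x) (nuU G ν y) E) ∧
      (∀ E : Set G.Space, MeasurableSet E → (∀ z ∈ E, z.1 0 = x.1 0) →
        (star G (nuS G ν x) (nuU G ν y) E = 0 ↔ ν E = 0)) :=
  statement9_general G ν hνp C hbound
end
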